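/- arXiv:1811.05548 — 3 statements merged into one kernel-verified Lean document; each statement's English description precedes it below -/
import Mathlib

section
/- Strong masking simulation is transitive in the following sense: if A ≼_m A' witnessed by relation M1 and A' ≼_m A'' witnessed by relation M2, where the fault set F' of A' is contained in the fault set F'' of A'' and faults of A' are masked in A (i.e., condition B.3 holds for M1 over F' and for M2 over F''), then the composition M1 ∘ M2 is a strong masking simulation witnessing A ≼_m A''. -/
/-!
Non-fault moves are matched by chaining the two simulations, since a non-fault of `A''` is a
non-fault of `A'` when `F' ⊆ F''`. A fault of `A''` is masked by `M2` at the intermediate state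
`s'`, which stays `M1`-related to the unmoved state of `A`.
-/

structure TS (S L : Type) where
  step : S → L → S → Prop
  init : S

/-- Strong masking simulation between a nominal system `A` (over `Σ = L \ F`)
and an implementation `A'` (over `Σ ∪ F`), where the nominal system is
augmented with masking self-loops (so the mask-move condition B.3 asks for a
state `t` with `s →M t`, i.e. `t = s`, related to `t'`). -/
def IsMaskingSim {S S' L : Type} (A : TS S L) (A' : TS S' L) (F : Set L)
    (M : S → S' → Prop) : Prop :=
  M A.init A'.init ∧
  ∀ s s', M s s' →
    (∀ e, e ∉ F → ∀ t, A.step s e t → ∃ t', A'.step s' e t' ∧ M t t') ∧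
    (∀ e, e ∉ F → ∀ t', A'.step s' e t' → ∃ t, A.step s e t ∧ M t t') ∧
    (∀ f, f ∈ F → ∀ t', A'.step s' f t' → ∃ t, t = s ∧ M t t')

namespace IsMaskingSim

variable {S S' L : Type} {A : TS S L} {A' : TS S' L} {F : Set L} {M : S → S' → Prop}
  {s t : S} {s' t' : S'} {e : L}

theorem init_rel (h : IsMaskingSim A A' F M) : M A.init A'.init := h.1

theorem forward (h : IsMaskingSim A A' F M) (hM : M s s') (he : e ∉ F) (ht : A.step s e t) :
    ∃ t', A'.step s' e t' ∧ M t t' :=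
  (h.2 s s' hM).1 e he t ht

theorem backward (h : IsMaskingSim A A' F M) (hM : M s s') (he : e ∉ F)
    (ht' : A'.step s' e t') : ∃ t, A.step s e t ∧ M t t' :=
  (h.2 s s' hM).2.1 e he t' ht'

theorem mask (h : IsMaskingSim A A' F M) (hM : M s s') (he : e ∈ F) (ht' : A'.step s' e t') :
    M s t' := by
  obtain ⟨_, rfl, hMt⟩ := (h.2 s s' hM).2.2 e he t' ht'
  exact hMt

end IsMaskingSim

/-- strong masking simulation is transitive: if `M1` witnesses
`A ≼_m A'` (fault set `F'`) and `M2` witnesses `A' ≼_m A''` (fault set `F''`),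
with `F' ⊆ F''`, then the relational composition `M1 ∘ M2` witnesses
`A ≼_m A''`. -/
theorem masking_sim_comp {S S' S'' L : Type} (A : TS S L) (A' : TS S' L)
    (A'' : TS S'' L) (F' F'' : Set L) (hF : F' ⊆ F'')
    (M1 : S → S' → Prop) (M2 : S' → S'' → Prop)
    (h1 : IsMaskingSim A A' F' M1) (h2 : IsMaskingSim A' A'' F'' M2) :
    IsMaskingSim A A'' F'' (Relation.Comp M1 M2) := by
  refine ⟨⟨A'.init, h1.init_rel, h2.init_rel⟩, ?_⟩
  rintro s s'' ⟨s', hM1, hM2⟩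
  refine ⟨fun e he t ht => ?_, fun e he t'' ht'' => ?_,
    fun f hf t'' ht'' => ⟨s, rfl, s', hM1, h2.mask hM2 hf ht''⟩⟩
  · obtain ⟨t', ht', hMt'⟩ := h1.forward hM1 (fun h => he (hF h)) ht
    obtain ⟨t'', ht'', hMt''⟩ := h2.forward hM2 he ht'
    exact ⟨t'', ht'', t', hMt', hMt''⟩
  · obtain ⟨t', ht', hMt'⟩ := h2.backward hM2 he ht''
    obtain ⟨t, ht, hMt⟩ := h1.backward hM1 (fun h => he (hF h)) ht'
    exact ⟨t, ht, t', hMt, hMt'⟩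
end

section
/- In the strong masking game, the verifier has a winning strategy (avoiding the error state forever) if and only if there exists a strong masking simulation between A and A', i.e., A ≼_m A'. -/
/-- States of the (strong) masking game graph: refuter states `(s, #, s', R)`,
verifier states `(s, σ^i, s', V)` (the `Bool` is `true` for side 1, i.e. a
pending label coming from the nominal system `A`, and `false` for side 2),
and the error state. -/
inductive GS (S S' L : Type) : Type where
  | R : S → S' → GS S S' L
  | V : S → L → Bool → S' → GS S S' L
  | err : GS S S' L

/-- Basic edges of the masking game graph for nominal `A`, implementation `A'`,
fault labels `F` and masking label `m`. -/
inductive GEdge {S S' L : Type} (A : TS S L) (A' : TS S' L) (F : Set L) (m : L) :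
    GS S S' L → L → GS S S' L → Prop where
  | chA {s s' σ t} : σ ∉ F → σ ≠ m → A.step s σ t →
      GEdge A A' F m (.R s s') σ (.V t σ true s')
  | chA' {s s' σ t'} : σ ≠ m → A'.step s' σ t' →
      GEdge A A' F m (.R s s') σ (.V s σ false t')
  | matchA' {s σ s' t'} : σ ∉ F → σ ≠ m → A'.step s' σ t' →
      GEdge A A' F m (.V s σ true s') σ (.R s t')
  | matchA {s σ s' t} : σ ∉ F → σ ≠ m → A.step s σ t →
      GEdge A A' F m (.V s σ false s') σ (.R t s')
  | mask {s σ s'} : σ ∈ F →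
      GEdge A A' F m (.V s σ false s') m (.R s s')

/-- Full edge relation of the masking game graph: basic edges, plus, for any
state with no outgoing basic edge (in particular the error state), edges
labelled by any `σ ∈ Σ` to the error state. -/
def fullEdge {S S' L : Type} (A : TS S L) (A' : TS S' L) (F : Set L) (m : L)
    (v : GS S S' L) (σ : L) (w : GS S S' L) : Prop :=
  GEdge A A' F m v σ w ∨
    ((∀ l u, ¬ GEdge A A' F m v l u) ∧ σ ∉ F ∧ σ ≠ m ∧ w = GS.err)

/-- `true` on refuter states (including the error state). -/
def isRefB {S S' L : Type} : GS S S' L → Bool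
  | .V _ _ _ _ => false
  | _ => true

/-- A verifier node whose pending label is a fault. -/
def isFaultV {S S' L : Type} (F : Set L) : GS S S' L → Prop
  | .V _ σ _ _ => σ ∈ F
  | _ => False

/-- The fault-stratified attractor sets `U^j_i` (first index `j`, second `i`):
`U^0_i = U^j_0 = ∅`, `U^1_1 = {err}`, and `U^{j+2}_{i+1}` collects refuter
nodes with a successor in `U^{j+1}_{i+1}`, non-fault verifier nodes all of
whose successors are in `∪_{j'≤j+1} U^{j'}_{i+1}` with one in `U^{j+1}_{i+1}`,
and fault verifier nodes all of whose successors are in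
`∪_{i'≤i, j'≤j+1} U^{j'}_{i'}` with one in `U^{j+1}_i`. -/
def Uset {α : Type} (post : α → Set α) (isRef isFault : α → Prop) (verr : α) :
    ℕ → ℕ → Set α
  | 0, _ => ∅
  | 1, i => if i = 1 then {verr} else ∅
  | _+2, 0 => ∅
  | j+2, i+1 =>
      {v | isRef v ∧ ∃ w ∈ post v, w ∈ Uset post isRef isFault verr (j+1) (i+1)} ∪
      {v | ¬ isRef v ∧ ¬ isFault v ∧
            (∀ w ∈ post v, ∃ j' : Fin (j+2), w ∈ Uset post isRef isFault verr j' (i+1)) ∧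
            ∃ w ∈ post v, w ∈ Uset post isRef isFault verr (j+1) (i+1)} ∪
      {v | ¬ isRef v ∧ isFault v ∧
            (∀ w ∈ post v, ∃ i' : Fin (i+1), ∃ j' : Fin (j+2),
              w ∈ Uset post isRef isFault verr j' i') ∧
            ∃ w ∈ post v, w ∈ Uset post isRef isFault verr (j+1) i}
  termination_by j _ => j
  decreasing_by all_goals first | exact j'.isLt | omega

/-- The sets `U^j_i` instantiated on the masking game graph of `A`, `A'`. -/
def UsetG {S S' L : Type} (A : TS S L) (A' : TS S' L) (F : Set L) (m : L) :
    ℕ → ℕ → Set (GS S S' L) :=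
  Uset (fun v => {w | ∃ l, fullEdge A A' F m v l w})
    (fun v => isRefB v = true) (isFaultV F) GS.err

/-- History-dependent strategies: given the history and the current state,
choose a label and a next state. -/
abbrev Strat (α L : Type) := List (α × L) → α → L × α

/-- The history (sequence of state/label pairs) of a play up to step `n`. -/
def hist {α L : Type} (ρ : ℕ → α) (σ : ℕ → L) (n : ℕ) : List (α × L) :=
  (List.range n).map fun k => (ρ k, σ k)

/-- `ρ, σ` form an (infinite) play of the graph `E` from `v0`. -/
def IsPlay {α L : Type} (E : α → L → α → Prop) (v0 : α) (ρ : ℕ → α) (σ : ℕ → L) : Prop :=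
  ρ 0 = v0 ∧ ∀ n, E (ρ n) (σ n) (ρ (n+1))

/-- The play `ρ, σ` conforms to the strategy `π` of the player owning the
states where `isRef · = mine`. -/
def Conf {α L : Type} (isRef : α → Bool) (mine : Bool) (π : Strat α L)
    (ρ : ℕ → α) (σ : ℕ → L) : Prop :=
  ∀ n, isRef (ρ n) = mine → (σ n, ρ (n+1)) = π (hist ρ σ n) (ρ n)

/-- Conformance to a memoryless (positional) strategy `f`. -/
def MemConf {α L : Type} (isRef : α → Bool) (mine : Bool) (f : α → L × α)
    (ρ : ℕ → α) (σ : ℕ → L) : Prop :=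
  ∀ n, isRef (ρ n) = mine → (σ n, ρ (n+1)) = f (ρ n)

/-- Auxiliary construction of the outcome of two strategies: history and
current state after `n` steps. -/
def outAux {α L : Type} (isRef : α → Bool) (πR πV : Strat α L) (v0 : α) :
    ℕ → List (α × L) × α
  | 0 => ([], v0)
  | n+1 =>
      let p := outAux isRef πR πV v0 n
      let c := if isRef p.2 then πR p.1 p.2 else πV p.1 p.2
      (p.1 ++ [(p.2, c.1)], c.2)

/-- State sequence of the outcome `out(πR, πV)`. -/
def outSt {α L : Type} (isRef : α → Bool) (πR πV : Strat α L) (v0 : α) (n : ℕ) : α :=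
  (outAux isRef πR πV v0 n).2

/-- Label sequence of the outcome `out(πR, πV)`. -/
def outLb {α L : Type} (isRef : α → Bool) (πR πV : Strat α L) (v0 : α) (n : ℕ) : L :=
  (if isRef (outSt isRef πR πV v0 n)
    then πR (outAux isRef πR πV v0 n).1 (outSt isRef πR πV v0 n)
    else πV (outAux isRef πR πV v0 n).1 (outSt isRef πR πV v0 n)).1

open Classical in
/-- The masking payoff `f_m(ρ) = lim_n pr1(v_n) / (1 + Σ_{i≤n} pr0(v_i))`,
where `v_n = (χ_F(σ_n), χ_{err}(ρ_{n+1}))`. -/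
noncomputable def payoff {α L : Type} (F : Set L) (verr : α)
    (ρ : ℕ → α) (σ : ℕ → L) : ℝ :=
  Filter.limUnder Filter.atTop fun n =>
    (if ρ (n+1) = verr then (1:ℝ) else 0) /
      (1 + ∑ i ∈ Finset.range (n+1), (if σ i ∈ F then (1:ℝ) else 0))

/-- Refuter strategies (valid at refuter nodes). -/
abbrev RStrat {S S' L : Type} (A : TS S L) (A' : TS S' L) (F : Set L) (m : L) :=
  {π : Strat (GS S S' L) L //
    ∀ h v, isRefB v = true → fullEdge A A' F m v (π h v).1 (π h v).2}

/-- Verifier strategies (valid at verifier nodes). -/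
abbrev VStrat {S S' L : Type} (A : TS S L) (A' : TS S' L) (F : Set L) (m : L) :=
  {π : Strat (GS S S' L) L //
    ∀ h v, isRefB v = false → fullEdge A A' F m v (π h v).1 (π h v).2}

/-- The value of the quantitative masking game (the masking distance
`δ_m(A, A')`): sup over refuter strategies of the inf over verifier
strategies of the payoff of the outcome play. -/
noncomputable def maskingValue {S S' L : Type} (A : TS S L) (A' : TS S' L)
    (F : Set L) (m : L) : ℝ :=
  ⨆ πR : RStrat A A' F m, ⨅ πV : VStrat A A' F m,
    payoff F GS.err
      (outSt isRefB πR.1 πV.1 (GS.R A.init A'.init))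
      (outLb isRefB πR.1 πV.1 (GS.R A.init A'.init))

/-!
(⇐) Given a masking simulation `M`, consider the invariant "refuter positions `(s, #, s', R)`
have `M s s'`, and from verifier positions some move leads back to an `M`-related refuter
position". Every refuter move preserves it (the simulation clauses provide the matching move,
and since `A` has no deadlocks no refuter position is sent to the error state), the verifier can
always preserve it, and it fails at the error state; so the positional strategy that preserves it
is winning.

(⇒) Given any (history-dependent) winning strategy, relate `s` and `s'` when `(s, #, s', R)` is
reachable in a play conforming to it. As the game graph has no dead ends, every finite
conforming play extends to an infinite one, so the verifier's answer at any reachable position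
avoids the error state, i.e. is a genuine matching move; reading off these answers for the three
kinds of challenges gives the three simulation clauses.
-/

theorem Relation.ReflTransGen.exists_seq_through {β : Type*} {r : β → β → Prop}
    (hr : ∀ a, ∃ b, r a b) {a b : β} (h : Relation.ReflTransGen r a b) :
    ∃ f : ℕ → β, f 0 = a ∧ (∀ k, r (f k) (f (k + 1))) ∧ ∃ n, f n = b := by
  induction h using Relation.ReflTransGen.head_induction_on with
  | refl =>
    choose next hnext using hr
    exact ⟨fun k => next^[k] b, rfl,
      fun k => by simpa only [Function.iterate_succ_apply'] using hnext _, 0, rfl⟩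
  | @head a c hac _ ih =>
    obtain ⟨f, hf0, hf, n, hn⟩ := ih
    refine ⟨fun | 0 => a | k + 1 => f k, rfl, ?_, n + 1, hn⟩
    rintro (_ | k)
    · simpa [hf0] using hac
    · exact hf k

section Game

variable {α L : Type} (E : α → L → α → Prop) (isRef : α → Bool) (π : Strat α L)

lemma hist_succ (ρ : ℕ → α) (σ : ℕ → L) (n : ℕ) :
    hist ρ σ (n + 1) = hist ρ σ n ++ [(ρ n, σ n)] := by
  simp [hist, List.range_succ]

def StaysIn (v₀ : α) (P : α → Prop) : Prop :=
  ∀ ρ σ, IsPlay E v₀ ρ σ → Conf isRef false π ρ σ → ∀ n, P (ρ n)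

-- Positions are paired with the history, which the strategy `π` may read.
def ConfStep (c c' : List (α × L) × α) : Prop :=
  ∃ l, E c.2 l c'.2 ∧ c'.1 = c.1 ++ [(c.2, l)] ∧ (isRef c.2 = false → (l, c'.2) = π c.1 c.2)

def ConfReach (v₀ : α) : List (α × L) × α → Prop :=
  Relation.ReflTransGen (ConfStep E isRef π) ([], v₀)

variable {E isRef π}

lemma ConfReach.tail_ref {v₀ v w : α} {h : List (α × L)} {l : L}
    (hc : ConfReach E isRef π v₀ (h, v)) (hv : isRef v = true) (he : E v l w) :
    ConfReach E isRef π v₀ (h ++ [(v, l)], w) :=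
  hc.tail ⟨l, he, rfl, fun hv' => by simp [hv] at hv'⟩

lemma ConfReach.tail_strat (hπ : ∀ h v, isRef v = false → E v (π h v).1 (π h v).2)
    {v₀ v : α} {h : List (α × L)} (hc : ConfReach E isRef π v₀ (h, v)) (hv : isRef v = false) :
    ConfReach E isRef π v₀ (h ++ [(v, (π h v).1)], (π h v).2) :=
  hc.tail ⟨_, hπ h v hv, rfl, fun _ => rfl⟩

lemma exists_confStep (hE : ∀ v, ∃ l w, E v l w)
    (hπ : ∀ h v, isRef v = false → E v (π h v).1 (π h v).2) (c : List (α × L) × α) :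
    ∃ c', ConfStep E isRef π c c' := by
  cases hv : isRef c.2
  · exact ⟨(c.1 ++ [(c.2, (π c.1 c.2).1)], (π c.1 c.2).2), _, hπ c.1 c.2 hv, rfl,
      fun _ => rfl⟩
  · obtain ⟨l, w, he⟩ := hE c.2
    exact ⟨(c.1 ++ [(c.2, l)], w), l, he, rfl, fun hv' => by simp [hv] at hv'⟩

lemma exists_conf_play_of_seq {v₀ : α} {c : ℕ → List (α × L) × α} (h0 : c 0 = ([], v₀))
    (hc : ∀ k, ConfStep E isRef π (c k) (c (k + 1))) :
    ∃ σ, IsPlay E v₀ (fun k => (c k).2) σ ∧ Conf isRef false π (fun k => (c k).2) σ := by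
  choose σ hE hhist hconf using hc
  have hist_eq : ∀ k, hist (fun k => (c k).2) σ k = (c k).1 := by
    intro k
    induction k with
    | zero => simp [hist, h0]
    | succ k ih => rw [hist_succ, ih, hhist]
  exact ⟨σ, ⟨by simp [h0], hE⟩, fun n hn => by rw [hist_eq]; exact hconf n hn⟩

lemma StaysIn.prop_of_confReach {v₀ : α} {P : α → Prop} (hP : StaysIn E isRef π v₀ P)
    (hE : ∀ v, ∃ l w, E v l w) (hπ : ∀ h v, isRef v = false → E v (π h v).1 (π h v).2)
    {c : List (α × L) × α} (hc : ConfReach E isRef π v₀ c) :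
    P c.2 := by
  obtain ⟨f, hf0, hf, n, rfl⟩ := hc.exists_seq_through (exists_confStep hE hπ)
  obtain ⟨σ, hplay, hconf⟩ := exists_conf_play_of_seq hf0 hf
  exact hP _ σ hplay hconf n

variable (E isRef)

lemma exists_strat_staysIn_of_invariant {v₀ : α} {Inv : α → Prop} (hE : ∀ v, ∃ l w, E v l w)
    (h₀ : Inv v₀) (href : ∀ v, isRef v = true → Inv v → ∀ l w, E v l w → Inv w)
    (hver : ∀ v, isRef v = false → Inv v → ∃ l w, E v l w ∧ Inv w) :
    ∃ π : Strat α L, (∀ h v, isRef v = false → E v (π h v).1 (π h v).2) ∧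
      StaysIn E isRef π v₀ Inv := by
  have hmove : ∀ v, ∃ p : L × α, E v p.1 p.2 ∧ (isRef v = false → Inv v → Inv p.2) := by
    intro v
    by_cases hv : isRef v = false ∧ Inv v
    · obtain ⟨l, w, he, hw⟩ := hver v hv.1 hv.2
      exact ⟨(l, w), he, fun _ _ => hw⟩
    · obtain ⟨l, w, he⟩ := hE v
      exact ⟨(l, w), he, fun h₁ h₂ => absurd ⟨h₁, h₂⟩ hv⟩
  choose f hfE hfInv using hmove
  refine ⟨fun _ v => f v, fun _ v _ => hfE v, fun ρ σ hplay hconf n => ?_⟩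
  induction n with
  | zero => rw [hplay.1]; exact h₀
  | succ n ih =>
    cases hv : isRef (ρ n)
    · rw [show ρ (n + 1) = (f (ρ n)).2 from congrArg Prod.snd (hconf n hv)]
      exact hfInv _ hv ih
    · exact href _ hv ih _ _ (hplay.2 n)

end Game

section Masking

variable {S S' L : Type} {A : TS S L} {A' : TS S' L} {F : Set L} {m : L}

lemma GEdge.of_fullEdge {v w : GS S S' L} {l : L} (he : fullEdge A A' F m v l w)
    (hw : w ≠ .err) : GEdge A A' F m v l w :=
  he.resolve_right fun h => hw h.2.2.2

lemma exists_fullEdge (hA : ∀ s, ∃ e t, A.step s e t)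
    (hSA : ∀ s e t, A.step s e t → e ∉ F ∧ e ≠ m) (v : GS S S' L) :
    ∃ l w, fullEdge A A' F m v l w := by
  by_cases h : ∃ l w, GEdge A A' F m v l w
  · obtain ⟨l, w, he⟩ := h
    exact ⟨l, w, .inl he⟩
  · simp only [not_exists] at h
    obtain ⟨e, t, ht⟩ := hA A.init
    obtain ⟨heF, hem⟩ := hSA _ _ _ ht
    exact ⟨e, .err, .inr ⟨h, heF, hem, rfl⟩⟩

lemma gEdge_of_fullEdge_R (hA : ∀ s, ∃ e t, A.step s e t)
    (hSA : ∀ s e t, A.step s e t → e ∉ F ∧ e ≠ m) {s : S} {s' : S'} {l : L} {w : GS S S' L}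
    (he : fullEdge A A' F m (.R s s') l w) : GEdge A A' F m (.R s s') l w := by
  refine he.resolve_right fun ⟨hno, _⟩ => ?_
  obtain ⟨e, t, ht⟩ := hA s
  obtain ⟨heF, hem⟩ := hSA s e t ht
  exact hno _ _ (.chA heF hem ht)

variable (A A' F m) in
def SimInv (M : S → S' → Prop) : GS S S' L → Prop
  | .R s s' => M s s'
  | .V s σ b s' => ∃ l t t', GEdge A A' F m (.V s σ b s') l (.R t t') ∧ M t t'
  | .err => False

lemma IsMaskingSim.simInv_of_fullEdge_R (hA : ∀ s, ∃ e t, A.step s e t)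
    (hSA : ∀ s e t, A.step s e t → e ∉ F ∧ e ≠ m) {M : S → S' → Prop}
    (hM : IsMaskingSim A A' F M) {s : S} {s' : S'} {l : L} {w : GS S S' L} (hss' : M s s')
    (he : fullEdge A A' F m (.R s s') l w) : SimInv A A' F m M w := by
  obtain ⟨hfwd, hbwd, hmask⟩ := hM.2 s s' hss'
  cases gEdge_of_fullEdge_R hA hSA he with
  | chA hσF hσm ht =>
    obtain ⟨t', ht', htt'⟩ := hfwd _ hσF _ ht
    exact ⟨_, _, _, .matchA' hσF hσm ht', htt'⟩
  | chA' hσm ht' =>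
    by_cases hσF : l ∈ F
    · obtain ⟨_, rfl, hst'⟩ := hmask _ hσF _ ht'
      exact ⟨_, _, _, .mask hσF, hst'⟩
    · obtain ⟨t, ht, htt'⟩ := hbwd _ hσF _ ht'
      exact ⟨_, _, _, .matchA hσF hσm ht, htt'⟩

theorem IsMaskingSim.exists_vStrat_staysIn (hA : ∀ s, ∃ e t, A.step s e t)
    (hSA : ∀ s e t, A.step s e t → e ∉ F ∧ e ≠ m) {M : S → S' → Prop}
    (hM : IsMaskingSim A A' F M) :
    ∃ π : VStrat A A' F m,
      StaysIn (fullEdge A A' F m) isRefB π.1 (.R A.init A'.init) (· ≠ .err) := by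
  obtain ⟨π, hπ, hinv⟩ := exists_strat_staysIn_of_invariant (fullEdge A A' F m) isRefB
    (v₀ := .R A.init A'.init) (Inv := SimInv A A' F m M) (exists_fullEdge hA hSA) hM.1
    (by
      rintro (⟨s, s'⟩ | _ | _) hv hss' l w he
      · exact hM.simInv_of_fullEdge_R hA hSA hss' he
      · cases hv
      · exact hss'.elim)
    (by
      rintro (_ | ⟨s, σ, b, s'⟩ | _) hv hinv
      · cases hv
      · obtain ⟨l, t, t', he, htt'⟩ := hinv
        exact ⟨l, .R t t', .inl he, htt'⟩
      · cases hv)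
  exact ⟨⟨π, hπ⟩, fun ρ σ hplay hconf n hn => by
    simpa [hn, SimInv] using hinv ρ σ hplay hconf n⟩

lemma exists_gEdge_confReach_of_staysIn (hA : ∀ s, ∃ e t, A.step s e t)
    (hSA : ∀ s e t, A.step s e t → e ∉ F ∧ e ≠ m) {π : VStrat A A' F m}
    (hwin : StaysIn (fullEdge A A' F m) isRefB π.1 (.R A.init A'.init) (· ≠ .err))
    {h : List (GS S S' L × L)} {s : S} {s' : S'} {l : L} {w : GS S S' L}
    (hreach : ConfReach (fullEdge A A' F m) isRefB π.1 (.R A.init A'.init) (h, .R s s'))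
    (he : GEdge A A' F m (.R s s') l w) :
    ∃ l' u h', GEdge A A' F m w l' u ∧
      ConfReach (fullEdge A A' F m) isRefB π.1 (.R A.init A'.init) (h', u) := by
  have hw : isRefB w = false := by cases he <;> rfl
  have hreach' := (hreach.tail_ref rfl (.inl he)).tail_strat π.2 hw
  exact ⟨_, _, _, GEdge.of_fullEdge (π.2 _ _ hw)
    (hwin.prop_of_confReach (exists_fullEdge hA hSA) π.2 hreach'), hreach'⟩

theorem isMaskingSim_of_staysIn (hA : ∀ s, ∃ e t, A.step s e t)
    (hSA : ∀ s e t, A.step s e t → e ∉ F ∧ e ≠ m)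
    (hSA' : ∀ s' e t', A'.step s' e t' → e ≠ m) {π : VStrat A A' F m}
    (hwin : StaysIn (fullEdge A A' F m) isRefB π.1 (.R A.init A'.init) (· ≠ .err)) :
    IsMaskingSim A A' F fun s s' =>
      ∃ h, ConfReach (fullEdge A A' F m) isRefB π.1 (.R A.init A'.init) (h, .R s s') := by
  refine ⟨⟨[], .refl⟩, fun s s' ⟨h, hreach⟩ => ⟨?_, ?_, ?_⟩⟩
  · intro e _ t ht
    obtain ⟨heF, hem⟩ := hSA s e t ht
    obtain ⟨_, _, h', he, hreach'⟩ :=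
      exists_gEdge_confReach_of_staysIn hA hSA hwin hreach (.chA heF hem ht)
    cases he with
    | matchA' _ _ ht' => exact ⟨_, ht', h', hreach'⟩
  · intro e heF t' ht'
    obtain ⟨_, _, h', he, hreach'⟩ :=
      exists_gEdge_confReach_of_staysIn hA hSA hwin hreach (.chA' (hSA' s' e t' ht') ht')
    cases he with
    | matchA _ _ ht => exact ⟨_, ht, h', hreach'⟩
    | mask hF => exact absurd hF heF
  · intro f hfF t' ht'
    obtain ⟨_, _, h', he, hreach'⟩ :=
      exists_gEdge_confReach_of_staysIn hA hSA hwin hreach (.chA' (hSA' s' f t' ht') ht')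
    cases he with
    | matchA hF _ _ => exact absurd hfF hF
    | mask _ => exact ⟨s, rfl, h', hreach'⟩

end Masking

theorem masking_game_verifier_iff_sim_general {S S' L : Type}
    (A : TS S L) (A' : TS S' L) (F : Set L) (m : L)
    (hA : ∀ s, ∃ e t, A.step s e t)
    (hSA : ∀ s e t, A.step s e t → e ∉ F ∧ e ≠ m)
    (hSA' : ∀ s' e t', A'.step s' e t' → e ≠ m) :
    (∃ π : VStrat A A' F m,
        ∀ ρ σ, IsPlay (fullEdge A A' F m) (GS.R A.init A'.init) ρ σ →
          Conf isRefB false π.1 ρ σ → ∀ n, ρ n ≠ GS.err) ↔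
      ∃ M : S → S' → Prop, IsMaskingSim A A' F M :=
  ⟨fun ⟨_, hwin⟩ => ⟨_, isMaskingSim_of_staysIn hA hSA hSA' hwin⟩,
    fun ⟨_, hM⟩ => hM.exists_vStrat_staysIn hA hSA⟩

/-- in the strong masking game the verifier has a winning
strategy (avoiding the error state forever) iff there is a strong masking
simulation between `A` and `A'`, i.e. `A ≼_m A'`. (As in the paper, every
state of `A` and `A'` has a successor, `A` is over `Σ`, and `A'` is over
`Σ ∪ F`; `m` is the fresh masking label.) -/
theorem masking_game_verifier_iff_sim {S S' L : Type}
    (A : TS S L) (A' : TS S' L) (F : Set L) (m : L) (hm : m ∉ F)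
    (hA : ∀ s, ∃ e t, A.step s e t)
    (hA' : ∀ s', ∃ e t', A'.step s' e t')
    (hSA : ∀ s e t, A.step s e t → e ∉ F ∧ e ≠ m)
    (hSA' : ∀ s' e t', A'.step s' e t' → e ≠ m) :
    (∃ π : VStrat A A' F m,
        ∀ ρ σ, IsPlay (fullEdge A A' F m) (GS.R A.init A'.init) ρ σ →
          Conf isRefB false π.1 ρ σ → ∀ n, ρ n ≠ GS.err) ↔
      ∃ M : S → S' → Prop, IsMaskingSim A A' F M :=
  masking_game_verifier_iff_sim_general A A' F m hA hSA hSA'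
end

section
/- The masking distance δ_m(A, A') equals 0 if and only if A ≼_m A' (there exists a strong masking simulation from A to A'). -/
/-!
If the initial node lies in the `N`-th level of the reachability attractor of `err`, the
refuter's attractor strategy reaches `err` within `N` steps, hence after at most `N` faults,
so the value is at least `1 / (1 + N)`. Otherwise, since verifier nodes have finitely many
successors, a verifier node outside the attractor has a successor outside it, and the refuter
nodes outside the attractor form a masking simulation. Conversely, a masking simulation
gives a positional verifier strategy that never lets the play reach `err`, so every outcome
has payoff `0`.
-/

open Classical

section Attractor

variable {α L : Type} {E : α → L → α → Prop} {isRef : α → Bool} {tgt : α}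

def attractor (E : α → L → α → Prop) (isRef : α → Bool) (tgt : α) : ℕ → Set α
  | 0 => {tgt}
  | n+1 => attractor E isRef tgt n ∪
      {v | isRef v = true ∧ ∃ l w, E v l w ∧ w ∈ attractor E isRef tgt n} ∪
      {v | isRef v = false ∧ ∀ l w, E v l w → w ∈ attractor E isRef tgt n}

lemma attractor_mono : Monotone (attractor E isRef tgt) :=
  monotone_nat_of_le_succ fun _ _ hv => Or.inl (Or.inl hv)

lemma mem_attractor_succ {n : ℕ} {v : α} (h : v ∈ attractor E isRef tgt (n+1)) :
    v = tgt ∨ (isRef v = true ∧ ∃ l w, E v l w ∧ w ∈ attractor E isRef tgt n) ∨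
      (isRef v = false ∧ ∀ l w, E v l w → w ∈ attractor E isRef tgt n) := by
  induction n with
  | zero =>
    rcases h with (h | h) | h
    exacts [Or.inl h, Or.inr (Or.inl h), Or.inr (Or.inr h)]
  | succ n ih =>
    rcases h with (h | h) | h
    · rcases ih h with h | ⟨hv, l, w, he, hw⟩ | ⟨hv, hw⟩
      · exact Or.inl h
      · exact Or.inr (Or.inl ⟨hv, l, w, he, attractor_mono n.le_succ hw⟩)
      · exact Or.inr (Or.inr ⟨hv, fun l w he => attractor_mono n.le_succ (hw l w he)⟩)
    · exact Or.inr (Or.inl h)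
    · exact Or.inr (Or.inr h)

lemma not_mem_attractor_of_edge {v w : α} {l : L} (hv : isRef v = true)
    (hsafe : ∀ n, v ∉ attractor E isRef tgt n) (he : E v l w) (n : ℕ) :
    w ∉ attractor E isRef tgt n :=
  fun hw => hsafe (n+1) (Or.inl (Or.inr ⟨hv, l, w, he, hw⟩))

lemma exists_edge_not_mem_attractor {v : α} (hv : isRef v = false)
    (hfin : {w | ∃ l, E v l w}.Finite) (hsafe : ∀ n, v ∉ attractor E isRef tgt n) :
    ∃ l w, E v l w ∧ ∀ n, w ∉ attractor E isRef tgt n := by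
  by_contra! h
  choose! level hlevel using fun w (hw : w ∈ {w | ∃ l, E v l w}) =>
    let ⟨l, he⟩ := hw; h l w he
  obtain ⟨N, hN⟩ := (hfin.image level).bddAbove
  refine hsafe (N+1) (Or.inr ⟨hv, fun l w he => ?_⟩)
  exact attractor_mono (hN ⟨w, ⟨l, he⟩, rfl⟩) (hlevel w ⟨l, he⟩)

noncomputable def moveInto (htot : ∀ v, ∃ p : L × α, E v p.1 p.2) (X : Set α) (v : α) :
    L × α :=
  if h : ∃ p : L × α, E v p.1 p.2 ∧ p.2 ∈ X then h.choose else (htot v).choose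

lemma moveInto_edge (htot : ∀ v, ∃ p : L × α, E v p.1 p.2) (X : Set α) (v : α) :
    E v (moveInto htot X v).1 (moveInto htot X v).2 := by
  unfold moveInto
  split
  · next h => exact h.choose_spec.1
  · exact (htot v).choose_spec

lemma moveInto_mem (htot : ∀ v, ∃ p : L × α, E v p.1 p.2) {X : Set α} {v w : α} {l : L}
    (he : E v l w) (hw : w ∈ X) : (moveInto htot X v).2 ∈ X := by
  have h : ∃ p : L × α, E v p.1 p.2 ∧ p.2 ∈ X := ⟨(l, w), he, hw⟩
  rw [moveInto, dif_pos h]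
  exact h.choose_spec.2

noncomputable def attractorMove (isRef : α → Bool) (tgt : α)
    (htot : ∀ v, ∃ p : L × α, E v p.1 p.2) (v : α) : L × α :=
  moveInto htot
    (attractor E isRef tgt (sInf {n | ∃ l w, E v l w ∧ w ∈ attractor E isRef tgt n})) v

lemma attractorMove_mem (htot : ∀ v, ∃ p : L × α, E v p.1 p.2) {n : ℕ} {v w : α} {l : L}
    (he : E v l w) (hw : w ∈ attractor E isRef tgt n) :
    (attractorMove isRef tgt htot v).2 ∈ attractor E isRef tgt n := by
  have hn : n ∈ {n | ∃ l w, E v l w ∧ w ∈ attractor E isRef tgt n} := ⟨l, w, he, hw⟩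
  obtain ⟨l', w', he', hw'⟩ := Nat.sInf_mem ⟨n, hn⟩
  exact attractor_mono (Nat.sInf_le hn) (moveInto_mem htot he' hw')

lemma exists_eq_of_memConf_attractorMove (htot : ∀ v, ∃ p : L × α, E v p.1 p.2)
    {N : ℕ} {ρ : ℕ → α} {σ : ℕ → L} (hE : ∀ n, E (ρ n) (σ n) (ρ (n+1)))
    (hc : MemConf isRef true (attractorMove isRef tgt htot) ρ σ)
    (h0 : ρ 0 ∈ attractor E isRef tgt N) : ∃ j ≤ N, ρ j = tgt := by
  induction N generalizing ρ σ with
  | zero => exact ⟨0, le_rfl, h0⟩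
  | succ N ih =>
    have h1 : ρ 0 = tgt ∨ ρ 1 ∈ attractor E isRef tgt N := by
      rcases mem_attractor_succ h0 with h | ⟨hv, l, w, he, hw⟩ | ⟨_, hw⟩
      · exact Or.inl h
      · rw [show ρ 1 = _ from congrArg Prod.snd (hc 0 hv)]
        exact Or.inr (attractorMove_mem htot he hw)
      · exact Or.inr (hw _ _ (hE 0))
    rcases h1 with h | h
    · exact ⟨0, N.succ.zero_le, h⟩
    · obtain ⟨j, hj, hρ⟩ :=
        ih (ρ := fun n => ρ (n+1)) (σ := fun n => σ (n+1)) (fun n => hE (n+1))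
          (fun n hn => hc (n+1) hn) h
      exact ⟨j+1, by omega, hρ⟩

lemma forall_mem_of_memConf_moveInto (htot : ∀ v, ∃ p : L × α, E v p.1 p.2) {G : Set α}
    {ρ : ℕ → α} {σ : ℕ → L} (hE : ∀ n, E (ρ n) (σ n) (ρ (n+1)))
    (hc : MemConf isRef false (moveInto htot G) ρ σ) (h0 : ρ 0 ∈ G)
    (hR : ∀ v ∈ G, isRef v = true → ∀ l w, E v l w → w ∈ G)
    (hV : ∀ v ∈ G, isRef v = false → ∃ l w, E v l w ∧ w ∈ G) (n : ℕ) :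
    ρ n ∈ G := by
  induction n with
  | zero => exact h0
  | succ n ih =>
    cases hv : isRef (ρ n)
    · obtain ⟨l, w, he, hw⟩ := hV _ ih hv
      rw [show ρ (n+1) = _ from congrArg Prod.snd (hc n hv)]
      exact moveInto_mem htot he hw
    · exact hR _ ih hv _ _ (hE n)

end Attractor

section Outcome

variable {α L : Type} (isRef : α → Bool) (πR πV : Strat α L) (v0 : α)

lemma outcome_step (n : ℕ) :
    (outLb isRef πR πV v0 n, outSt isRef πR πV v0 (n+1)) =
      if isRef (outSt isRef πR πV v0 n) then
        πR (outAux isRef πR πV v0 n).1 (outSt isRef πR πV v0 n)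
      else πV (outAux isRef πR πV v0 n).1 (outSt isRef πR πV v0 n) :=
  rfl

lemma isPlay_outcome {E : α → L → α → Prop}
    (hR : ∀ h v, isRef v = true → E v (πR h v).1 (πR h v).2)
    (hV : ∀ h v, isRef v = false → E v (πV h v).1 (πV h v).2) :
    IsPlay E v0 (outSt isRef πR πV v0) (outLb isRef πR πV v0) := by
  refine ⟨rfl, fun n => ?_⟩
  show E _ (outLb isRef πR πV v0 n, outSt isRef πR πV v0 (n+1)).1
    (outLb isRef πR πV v0 n, outSt isRef πR πV v0 (n+1)).2
  rw [outcome_step]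
  split
  · next hv => exact hR _ _ hv
  · next hv => exact hV _ _ (by simpa using hv)

lemma memConf_outcome_left (g : α → L × α) :
    MemConf isRef true g (outSt isRef (fun _ => g) πV v0) (outLb isRef (fun _ => g) πV v0) :=
  fun n hn => by rw [outcome_step, if_pos hn]

lemma memConf_outcome_right (g : α → L × α) :
    MemConf isRef false g (outSt isRef πR (fun _ => g) v0) (outLb isRef πR (fun _ => g) v0) :=
  fun n hn => by rw [outcome_step, if_neg (by simp [hn])]

end Outcome

section Payoff

variable {α L : Type} (F : Set L) {verr : α} {ρ : ℕ → α} {σ : ℕ → L}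

noncomputable def faultCount (σ : ℕ → L) (n : ℕ) : ℝ :=
  ∑ i ∈ Finset.range n, if σ i ∈ F then 1 else 0

lemma faultCount_nonneg (n : ℕ) : 0 ≤ faultCount F σ n :=
  Finset.sum_nonneg fun _ _ => by positivity

lemma faultCount_le (n : ℕ) : faultCount F σ n ≤ n :=
  calc faultCount F σ n ≤ ∑ _i ∈ Finset.range n, (1 : ℝ) :=
        Finset.sum_le_sum fun _ _ => by split <;> norm_num
    _ = n := by simp

lemma payoff_eq_zero_of_forall_ne (h : ∀ n, ρ n ≠ verr) : payoff F verr ρ σ = 0 := by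
  refine Filter.Tendsto.limUnder_eq (tendsto_const_nhds.congr fun n => ?_)
  simp [h (n+1)]

lemma payoff_eq_of_absorbed {N : ℕ} (habs : ∀ k, N ≤ k → ρ k = verr ∧ σ k ∉ F) :
    payoff F verr ρ σ = 1 / (1 + faultCount F σ N) := by
  refine Filter.Tendsto.limUnder_eq (tendsto_const_nhds.congr' ?_)
  filter_upwards [Filter.eventually_ge_atTop N] with n hn
  have hcount : faultCount F σ (n+1) = faultCount F σ N := by
    refine (Finset.sum_subset (Finset.range_subset_range.2 (by omega)) fun i hi hiN => ?_).symm
    simp only [Finset.mem_range] at hi hiN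
    simp [(habs i (by omega)).2]
  rw [if_pos (habs (n+1) (by omega)).1, ← faultCount, hcount]

end Payoff

section GameValue

variable {ι κ : Type*} {f : ι → κ → ℝ}

lemma iSup_iInf_eq_zero (hf : ∀ i k, 0 ≤ f i k) {k₀ : κ} (hk₀ : ∀ i, f i k₀ = 0) :
    ⨆ i, ⨅ k, f i k = 0 := by
  have hinner : ∀ i, ⨅ k, f i k = 0 := fun i =>
    le_antisymm ((ciInf_le ⟨0, by rintro _ ⟨k, rfl⟩; exact hf i k⟩ k₀).trans (hk₀ i).le)
      (Real.iInf_nonneg (hf i))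
  simp only [hinner, Real.iSup_const_zero]

lemma le_iSup_iInf [Nonempty κ] (hf : ∀ i k, f i k ∈ Set.Icc 0 1) {c : ℝ} (i₀ : ι)
    (hc : ∀ k, c ≤ f i₀ k) : c ≤ ⨆ i, ⨅ k, f i k := by
  obtain ⟨k₀⟩ := ‹Nonempty κ›
  have hbdd : BddAbove (Set.range fun i => ⨅ k, f i k) := by
    refine ⟨1, ?_⟩
    rintro _ ⟨i, rfl⟩
    exact (ciInf_le ⟨0, by rintro _ ⟨k, rfl⟩; exact (hf i k).1⟩ k₀).trans (hf i k₀).2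
  exact (le_ciInf hc).trans (le_ciSup hbdd i₀)

end GameValue

section MaskingGame

variable {S S' L : Type} {A : TS S L} {A' : TS S' L} {F : Set L} {m : L}

abbrev maskingAttractor (A : TS S L) (A' : TS S' L) (F : Set L) (m : L) :
    ℕ → Set (GS S S' L) :=
  attractor (fullEdge A A' F m) isRefB GS.err

lemma fullEdge_err {l : L} {w : GS S S' L} (h : fullEdge A A' F m GS.err l w) :
    w = GS.err ∧ l ∉ F := by
  rcases h with h | ⟨_, hl, _, hw⟩
  · cases h
  · exact ⟨hw, hl⟩

lemma fullEdge_total (hσ : ∃ σ, σ ∉ F ∧ σ ≠ m) (v : GS S S' L) :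
    ∃ p : L × GS S S' L, fullEdge A A' F m v p.1 p.2 := by
  by_cases h : ∃ l u, GEdge A A' F m v l u
  · obtain ⟨l, u, h⟩ := h
    exact ⟨(l, u), Or.inl h⟩
  · obtain ⟨σ, hσF, hσm⟩ := hσ
    exact ⟨(σ, GS.err), Or.inr ⟨by simpa using h, hσF, hσm, rfl⟩⟩

lemma finite_fullEdge_succ [Finite S] [Finite S'] {v : GS S S' L} (hv : isRefB v = false) :
    {w | ∃ l, fullEdge A A' F m v l w}.Finite := by
  refine ((Set.finite_range fun p : S × S' => GS.R p.1 p.2).insert GS.err).subset ?_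
  rintro w ⟨l, he | ⟨-, -, -, rfl⟩⟩
  · cases he <;> simp_all [isRefB]
  · exact Set.mem_insert _ _

lemma IsPlay.absorbed {v0 : GS S S' L} {ρ : ℕ → GS S S' L} {σ : ℕ → L}
    (hp : IsPlay (fullEdge A A' F m) v0 ρ σ) {N : ℕ} (hN : ρ N = GS.err) :
    ∀ k, N ≤ k → ρ k = GS.err ∧ σ k ∉ F := by
  have herr : ∀ k, N ≤ k → ρ k = GS.err := fun k hk => by
    induction k, hk using Nat.le_induction with
    | base => exact hN
    | succ k _ ih => exact (fullEdge_err (ih ▸ hp.2 k)).1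
  exact fun k hk => ⟨herr k hk, (fullEdge_err (herr k hk ▸ hp.2 k)).2⟩

lemma IsPlay.payoff_mem_Icc {v0 : GS S S' L} {ρ : ℕ → GS S S' L} {σ : ℕ → L}
    (hp : IsPlay (fullEdge A A' F m) v0 ρ σ) : payoff F GS.err ρ σ ∈ Set.Icc 0 1 := by
  by_cases h : ∃ j, ρ j = GS.err
  · obtain ⟨j, hj⟩ := h
    rw [payoff_eq_of_absorbed F (hp.absorbed hj)]
    have := faultCount_nonneg F (σ := σ) j
    exact ⟨by positivity, by rw [div_le_one (by linarith)]; linarith⟩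
  · rw [payoff_eq_zero_of_forall_ne F (by simpa using h)]
    exact ⟨le_rfl, zero_le_one⟩

lemma IsPlay.one_div_le_payoff {v0 : GS S S' L} {ρ : ℕ → GS S S' L} {σ : ℕ → L}
    (hp : IsPlay (fullEdge A A' F m) v0 ρ σ) {j : ℕ} (hj : ρ j = GS.err) :
    1 / (1 + (j : ℝ)) ≤ payoff F GS.err ρ σ := by
  rw [payoff_eq_of_absorbed F (hp.absorbed hj)]
  have := faultCount_nonneg F (σ := σ) j
  gcongr
  exact faultCount_le F j

lemma payoff_outcome_mem_Icc (πR : RStrat A A' F m) (πV : VStrat A A' F m) :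
    payoff F GS.err (outSt isRefB πR.1 πV.1 (GS.R A.init A'.init))
      (outLb isRefB πR.1 πV.1 (GS.R A.init A'.init)) ∈ Set.Icc 0 1 :=
  (isPlay_outcome isRefB πR.1 πV.1 _ πR.2 πV.2).payoff_mem_Icc

lemma one_div_le_maskingValue (hσ : ∃ σ, σ ∉ F ∧ σ ≠ m) {N : ℕ}
    (hN : GS.R A.init A'.init ∈ maskingAttractor A A' F m N) :
    1 / (1 + (N : ℝ)) ≤ maskingValue A A' F m := by
  have htot := fullEdge_total (A := A) (A' := A') hσ
  have : Nonempty (VStrat A A' F m) :=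
    ⟨⟨fun _ v => (htot v).choose, fun _ v _ => (htot v).choose_spec⟩⟩
  let πR : RStrat A A' F m :=
    ⟨fun _ => attractorMove isRefB GS.err htot, fun _ v _ => moveInto_edge htot _ v⟩
  refine le_iSup_iInf payoff_outcome_mem_Icc πR fun πV => ?_
  have hp := isPlay_outcome isRefB πR.1 πV.1 (GS.R A.init A'.init) πR.2 πV.2
  obtain ⟨j, hjN, hj⟩ := exists_eq_of_memConf_attractorMove htot hp.2
    (memConf_outcome_left isRefB πV.1 _ _) (hp.1 ▸ hN)
  calc 1 / (1 + (N : ℝ)) ≤ 1 / (1 + (j : ℝ)) := by gcongr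
    _ ≤ _ := hp.one_div_le_payoff hj

lemma exists_gEdge_not_mem_maskingAttractor [Finite S] [Finite S'] {v : GS S S' L}
    (hv : isRefB v = false) (hsafe : ∀ n, v ∉ maskingAttractor A A' F m n) :
    ∃ l w, GEdge A A' F m v l w ∧ ∀ n, w ∉ maskingAttractor A A' F m n := by
  obtain ⟨l, w, he | ⟨-, -, -, rfl⟩, hw⟩ :=
    exists_edge_not_mem_attractor hv (finite_fullEdge_succ hv) hsafe
  · exact ⟨l, w, he, hw⟩
  · exact absurd rfl (hw 0)

lemma isMaskingSim_of_not_mem_maskingAttractor [Finite S] [Finite S'] (hm : m ∉ F)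
    (hSA : ∀ s e t, A.step s e t → e ∉ F ∧ e ≠ m)
    (hSA' : ∀ s' e t', A'.step s' e t' → e ≠ m)
    (h0 : ∀ n, GS.R A.init A'.init ∉ maskingAttractor A A' F m n) :
    IsMaskingSim A A' F fun s s' => ∀ n, GS.R s s' ∉ maskingAttractor A A' F m n := by
  refine ⟨h0, fun s s' hM => ⟨?_, ?_, ?_⟩⟩
  · intro e he t hstep
    obtain ⟨l, w, hw, hsafe⟩ := exists_gEdge_not_mem_maskingAttractor rfl
      (not_mem_attractor_of_edge rfl hM (Or.inl (.chA he (hSA s e t hstep).2 hstep)))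
    cases hw with
    | matchA' _ _ hstep' => exact ⟨_, hstep', hsafe⟩
  · intro e he t' hstep
    obtain ⟨l, w, hw, hsafe⟩ := exists_gEdge_not_mem_maskingAttractor rfl
      (not_mem_attractor_of_edge rfl hM (Or.inl (.chA' (hSA' s' e t' hstep) hstep)))
    cases hw with
    | matchA _ _ hstep' => exact ⟨_, hstep', hsafe⟩
    | mask hf => exact absurd hf he
  · intro f hf t' hstep
    obtain ⟨l, w, hw, hsafe⟩ := exists_gEdge_not_mem_maskingAttractor rfl
      (not_mem_attractor_of_edge rfl hM (Or.inl (.chA' (fun h => hm (h ▸ hf)) hstep)))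
    cases hw with
    | matchA hf' _ _ => exact absurd hf hf'
    | mask _ => exact ⟨s, rfl, hsafe⟩

def MatchedBy (A : TS S L) (A' : TS S' L) (F : Set L) (m : L) (M : S → S' → Prop) :
    GS S S' L → Prop
  | .R s s' => M s s'
  | .V s σ b s' => ∃ l t t', GEdge A A' F m (.V s σ b s') l (.R t t') ∧ M t t'
  | .err => False

lemma matchedBy_of_fullEdge {M : S → S' → Prop} (hM : IsMaskingSim A A' F M)
    (hA : ∀ s, ∃ e t, A.step s e t) (hSA : ∀ s e t, A.step s e t → e ∉ F ∧ e ≠ m)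
    {s : S} {s' : S'} {l : L} {w : GS S S' L} (hss' : M s s')
    (he : fullEdge A A' F m (.R s s') l w) : MatchedBy A A' F m M w := by
  obtain ⟨hsimA, hsimA', hsimF⟩ := hM.2 s s' hss'
  rcases he with he | ⟨hnone, -⟩
  · cases he with
    | chA hF hm hstep =>
      obtain ⟨t', hstep', ht⟩ := hsimA _ hF _ hstep
      exact ⟨_, _, _, .matchA' hF hm hstep', ht⟩
    | chA' hm hstep =>
      by_cases hF : l ∈ F
      · obtain ⟨_, rfl, ht⟩ := hsimF _ hF _ hstep
        exact ⟨_, _, _, .mask hF, ht⟩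
      · obtain ⟨t, hstep', ht⟩ := hsimA' _ hF _ hstep
        exact ⟨_, _, _, .matchA hF hm hstep', ht⟩
  · obtain ⟨e, t, hstep⟩ := hA s
    exact (hnone e _ (.chA (hSA s e t hstep).1 (hSA s e t hstep).2 hstep)).elim

lemma maskingValue_eq_zero_of_isMaskingSim (hσ : ∃ σ, σ ∉ F ∧ σ ≠ m)
    (hA : ∀ s, ∃ e t, A.step s e t) (hSA : ∀ s e t, A.step s e t → e ∉ F ∧ e ≠ m)
    {M : S → S' → Prop} (hM : IsMaskingSim A A' F M) : maskingValue A A' F m = 0 := by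
  have htot := fullEdge_total (A := A) (A' := A') hσ
  let G : Set (GS S S' L) := {v | MatchedBy A A' F m M v}
  let πV : VStrat A A' F m := ⟨fun _ => moveInto htot G, fun _ v _ => moveInto_edge htot _ v⟩
  refine iSup_iInf_eq_zero (fun πR πV => (payoff_outcome_mem_Icc πR πV).1)
    (k₀ := πV) fun πR => payoff_eq_zero_of_forall_ne F fun n hn => ?_
  have hp := isPlay_outcome isRefB πR.1 πV.1 (GS.R A.init A'.init) πR.2 πV.2
  have hG : ∀ n, outSt isRefB πR.1 πV.1 (GS.R A.init A'.init) n ∈ G := by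
    refine forall_mem_of_memConf_moveInto htot hp.2 (memConf_outcome_right isRefB πR.1 _ _)
      (hp.1 ▸ hM.1) (fun v hv hvR l w he => ?_) (fun v hv hvV => ?_)
    · cases v with
      | R s s' => exact matchedBy_of_fullEdge hM hA hSA hv he
      | V => simp [isRefB] at hvR
      | err => exact hv.elim
    · cases v with
      | V s σ b s' =>
        obtain ⟨l, t, t', he, ht⟩ := hv
        exact ⟨l, _, Or.inl he, ht⟩
      | _ => simp [isRefB] at hvV
  have herr := hG n
  rw [hn] at herr
  exact herr

end MaskingGame

theorem masking_distance_zero_iff_sim_general {S S' L : Type}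
    [Finite S] [Finite S']
    (A : TS S L) (A' : TS S' L) (F : Set L) (m : L) (hm : m ∉ F)
    (hA : ∀ s, ∃ e t, A.step s e t)
    (hSA : ∀ s e t, A.step s e t → e ∉ F ∧ e ≠ m)
    (hSA' : ∀ s' e t', A'.step s' e t' → e ≠ m) :
    maskingValue A A' F m = 0 ↔ ∃ M : S → S' → Prop, IsMaskingSim A A' F M := by
  obtain ⟨e, t, hstep⟩ := hA A.init
  have hσ : ∃ σ, σ ∉ F ∧ σ ≠ m := ⟨e, hSA _ _ _ hstep⟩
  constructor
  · intro hval
    by_contra hnosim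
    obtain ⟨N, hN⟩ : ∃ N, GS.R A.init A'.init ∈ maskingAttractor A A' F m N := by
      by_contra! h
      exact hnosim ⟨_, isMaskingSim_of_not_mem_maskingAttractor hm hSA hSA' h⟩
    have hlow := one_div_le_maskingValue hσ hN
    rw [hval] at hlow
    have : (0 : ℝ) < 1 / (1 + N) := by positivity
    linarith
  · rintro ⟨M, hM⟩
    exact maskingValue_eq_zero_of_isMaskingSim hσ hA hSA hM

/-- the masking distance `δ_m(A, A')` is `0` iff `A ≼_m A'`,
i.e. iff there is a strong masking simulation from `A` to `A'`. -/
theorem masking_distance_zero_iff_sim {S S' L : Type}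
    [Finite S] [Finite S'] [Finite L]
    (A : TS S L) (A' : TS S' L) (F : Set L) (m : L) (hm : m ∉ F)
    (hA : ∀ s, ∃ e t, A.step s e t)
    (hA' : ∀ s', ∃ e t', A'.step s' e t')
    (hSA : ∀ s e t, A.step s e t → e ∉ F ∧ e ≠ m)
    (hSA' : ∀ s' e t', A'.step s' e t' → e ≠ m) :
    maskingValue A A' F m = 0 ↔ ∃ M : S → S' → Prop, IsMaskingSim A A' F M :=
  masking_distance_zero_iff_sim_general A A' F m hm hA hSA hSA'
end
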